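/- For every real number a > 1, define β_a : ℤ → ℝ by β_a(n) = sgn(n)·a^{|n|} (so β_a(0) = 0). Then for each a > 1, the set Λ_{β_a} = {(n, β_a(n)) : n ∈ ℤ} is a spectrum of the self-affine measure μ = μ_{R,B} for R = [[2,1],[0,2]] and B = {(0,0),(1,0)} with dim_Be(Λ_{β_a}) = 0, and the sets Λ_{β_a} for distinct a > 1 are pairwise distinct. -/

import Mathlib

open MeasureTheory Filter Set Metric
open scoped ENNReal

noncomputable section

/-- The plane with the Euclidean metric. -/
abbrev Plane : Type := EuclideanSpace ℝ (Fin 2)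

/-- The point `(a, b)` of the Euclidean plane. -/
def pt (a b : ℝ) : Plane := WithLp.toLp 2 ![a, b]

/-- The self-affine measure `μ_{R,B}` for `R = [[2,1],[0,2]]`, `B = {(0,0),(1,0)}`:
the pushforward of Lebesgue measure on `[0,1]` under `x ↦ (x, 0)`. -/
def muRB : Measure Plane :=
  Measure.map (fun x : ℝ => pt x 0) (volume.restrict (Set.Icc (0:ℝ) 1))

instance : IsProbabilityMeasure (volume.restrict (Set.Icc (0:ℝ) 1)) :=
  ⟨by simp [Real.volume_Icc]⟩

lemma measurable_pt0 : Measurable (fun x : ℝ => pt x 0) := by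
  unfold pt
  refine (WithLp.measurable_toLp ..).comp (f := fun x : ℝ => ![x, 0]) (measurable_pi_lambda _ (fun i => ?_))
  fin_cases i
  · simp only [Matrix.cons_val_zero]
    exact measurable_id
  · simp only [Matrix.cons_val_one, Matrix.head_cons]
    exact measurable_const

instance : IsProbabilityMeasure muRB :=
  Measure.isProbabilityMeasure_map measurable_pt0.aemeasurable

/-- The Fourier transform `μ̂(ξ) = ∫ e^{-2πi⟨ξ,x⟩} dμ(x)` of a measure on the plane. -/
def fourierTransform (μ : Measure Plane) (ξ : Plane) : ℂ :=
  ∫ x, Complex.exp ((-(2 * Real.pi * (inner ℝ ξ x : ℝ)) : ℝ) * Complex.I) ∂μ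

/-- The exponential function `e_λ(x) = e^{-2πi⟨λ,x⟩}`. -/
def expFn (lam : Plane) : Plane → ℂ :=
  fun x => Complex.exp ((-(2 * Real.pi * (inner ℝ lam x : ℝ)) : ℝ) * Complex.I)

lemma expFn_memLp (μ : Measure Plane) [IsFiniteMeasure μ] (lam : Plane) :
    MemLp (expFn lam) 2 μ := by
  refine MemLp.of_bound ?_ 1 ?_
  · apply Continuous.aestronglyMeasurable
    unfold expFn
    have h1 : Continuous fun x : Plane => (inner ℝ lam x : ℝ) :=
      continuous_const.inner continuous_id
    exact Complex.continuous_exp.comp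
      ((Complex.continuous_ofReal.comp ((continuous_const.mul h1).neg)).mul continuous_const)
  · refine Eventually.of_forall fun x => ?_
    unfold expFn
    rw [Complex.norm_exp_ofReal_mul_I]

/-- The exponential `e_λ` as an element of `L²(μ)`. -/
def expLp (μ : Measure Plane) [IsFiniteMeasure μ] (lam : Plane) : Lp ℂ 2 μ :=
  (expFn_memLp μ lam).toLp _

/-- `Λ` is an orthogonal set of `μ`: the exponentials `{e_λ : λ ∈ Λ}` form an
orthonormal family in `L²(μ)`. -/
def IsOrthogonalSet (μ : Measure Plane) [IsFiniteMeasure μ] (Λ : Set Plane) : Prop :=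
  Orthonormal ℂ (fun lam : Λ => expLp μ lam)

/-- `Λ` is a spectrum of `μ`: the exponentials `{e_λ : λ ∈ Λ}` form an
orthonormal basis of `L²(μ)`. -/
def IsSpectrum (μ : Measure Plane) [IsFiniteMeasure μ] (Λ : Set Plane) : Prop :=
  Orthonormal ℂ (fun lam : Λ => expLp μ lam) ∧
    (Submodule.span ℂ (Set.range (fun lam : Λ => expLp μ lam))).topologicalClosure = ⊤

/-- The upper `r`-Beurling density
`D_r^+(Λ) = limsup_{h→∞} sup_{x} #(Λ ∩ B(x,h)) / h^r`. -/
def beurlingDensity (r : ℝ) (Λ : Set Plane) : ℝ≥0∞ :=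
  limsup (fun h : ℝ =>
    ⨆ x : Plane, ((Λ ∩ Metric.ball x h).encard : ℝ≥0∞) / ENNReal.ofReal (h ^ r)) atTop

/-- The upper `r`-density (centered at the origin)
`B_r^+(Λ) = limsup_{h→∞} #(Λ ∩ B(0,h)) / h^r`. -/
def upperDensity (r : ℝ) (Λ : Set Plane) : ℝ≥0∞ :=
  limsup (fun h : ℝ =>
    ((Λ ∩ Metric.ball (0 : Plane) h).encard : ℝ≥0∞) / ENNReal.ofReal (h ^ r)) atTop

/-- The Beurling dimension `dim_Be(Λ) = sup {r > 0 : D_r^+(Λ) = ∞}`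
(equal to `0` when the set is empty, by the convention `sSup ∅ = 0` in `ℝ`). -/
def beurlingDim (Λ : Set Plane) : ℝ :=
  sSup {r : ℝ | 0 < r ∧ beurlingDensity r Λ = ⊤}

/-- The Banach dimension `dim_Ba(Λ) = sup {r > 0 : B_r^+(Λ) = ∞}`. -/
def banachDim (Λ : Set Plane) : ℝ :=
  sSup {r : ℝ | 0 < r ∧ upperDensity r Λ = ⊤}

/-- The sign of an integer, as a real number. -/
def isgn (n : ℤ) : ℝ := (Int.sign n : ℝ)

end

/-!
`muRB` is the image of the Haar measure of `ℝ/ℤ` under `t ↦ (t, 0)`, `t ∈ (0, 1]`, so composition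
with this map is a linear isometry `L²(muRB) → L²(ℝ/ℤ)`. It sends `e_(n,b)` to the character
`t ↦ e^{-2πint}`, whatever `b` is, hence for every `β : ℤ → ℝ` it sends the exponentials of
`Λ_β = {(n, β n)}` onto the Fourier basis: they are orthonormal and complete.

For `β = β_a`, a point of `Λ_β` in a ball of radius `h` has second coordinate `±a^k` in an interval
of length `2h`, and two such powers `a^k ≤ a^l` satisfy `a^(l-k) < 1 + 2h`. So a ball of radius `h`
holds `O(log h)` points, which is `o(h^r)` for every `r > 0`. Finally `Λ_β` determines `β`, and
`β_a(1) = a`.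
-/

open Asymptotics

instance : Fact ((0 : ℝ) < 1) := ⟨one_pos⟩

theorem pt_inj {a b c d : ℝ} : pt a b = pt c d ↔ a = c ∧ b = d :=
  ⟨fun h => ⟨congrArg (· 0) h, congrArg (· 1) h⟩, by rintro ⟨rfl, rfl⟩; rfl⟩

theorem inner_pt_pt (a b c d : ℝ) : inner ℝ (pt a b) (pt c d) = a * c + b * d := by
  simp [pt, EuclideanSpace.inner_eq_star_dotProduct, dotProduct, Fin.sum_univ_two, mul_comm]

section HilbertBasis

variable {𝕜 E F ι ι' : Type*} [RCLike 𝕜] [NormedAddCommGroup E] [InnerProductSpace 𝕜 E]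
  [CompleteSpace E] [NormedAddCommGroup F] [InnerProductSpace 𝕜 F]

theorem orthonormal_and_dense_span_of_linearIsometry_eq_hilbertBasis (T : E →ₗᵢ[𝕜] F)
    (b : HilbertBasis ι' 𝕜 F) (e : ι ≃ ι') (v : ι → E) (hv : ∀ i, T (v i) = b (e i)) :
    Orthonormal 𝕜 v ∧ (Submodule.span 𝕜 (range v)).topologicalClosure = ⊤ := by
  refine ⟨T.orthonormal_comp_iff.mp ?_, ?_⟩
  · rw [show T ∘ v = b ∘ e from funext hv]
    exact b.orthonormal.comp e e.injective
  rw [Submodule.topologicalClosure_eq_top_iff, Submodule.eq_bot_iff]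
  intro g hg
  have hrepr : b.repr (T g) = 0 := by
    ext i
    obtain ⟨j, rfl⟩ := e.surjective i
    rw [b.repr_apply_apply, ← hv, T.inner_map_map]
    exact (Submodule.mem_orthogonal _ g).1 hg _ (Submodule.subset_span ⟨j, rfl⟩)
  exact (map_eq_zero_iff T T.injective).mp (by simpa using hrepr)

end HilbertBasis

noncomputable def circleToPlane (t : AddCircle (1 : ℝ)) : Plane := pt (AddCircle.equivIoc 1 0 t) 0

theorem measurePreserving_circleToPlane :
    MeasurePreserving circleToPlane AddCircle.haarAddCircle muRB := by
  have hvol : (AddCircle.haarAddCircle : Measure (AddCircle (1 : ℝ))) = volume := by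
    simp [AddCircle.volume_eq_smul_haarAddCircle]
  have hpt : MeasurePreserving (fun x : ℝ => pt x 0) (volume.restrict (Ioc 0 (0 + 1))) muRB := by
    refine ⟨measurable_pt0, ?_⟩
    rw [zero_add, Measure.restrict_congr_set Ioc_ae_eq_Icc]
    rfl
  rw [hvol]
  exact hpt.comp ((measurePreserving_subtype_coe measurableSet_Ioc).comp
    (AddCircle.measurePreserving_equivIoc 1))

theorem expFn_pt_comp_circleToPlane (n : ℤ) (b : ℝ) :
    expFn (pt n b) ∘ circleToPlane = fourier (T := 1) (-n) := by
  ext t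
  conv_rhs => rw [← AddCircle.coe_equivIoc (a := 0) (y := t)]
  rw [Function.comp_apply, circleToPlane, expFn, inner_pt_pt, fourier_coe_apply]
  congr 1
  push_cast
  ring

theorem compMeasurePreserving_circleToPlane_expLp (n : ℤ) (b : ℝ) :
    Lp.compMeasurePreserving circleToPlane measurePreserving_circleToPlane (expLp muRB (pt n b))
      = fourierLp 2 (-n) := by
  refine Lp.ext ?_
  filter_upwards [Lp.coeFn_compMeasurePreserving (expLp muRB (pt n b))
      measurePreserving_circleToPlane,
    measurePreserving_circleToPlane.quasiMeasurePreserving.ae_eq_comp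
      (expFn_memLp muRB (pt n b)).coeFn_toLp,
    coeFn_fourierLp 2 (-n)] with t h₁ h₂ h₃
  rw [h₁, h₃, ← expFn_pt_comp_circleToPlane n b]
  exact h₂

theorem isSpectrum_muRB_range_pt (β : ℤ → ℝ) :
    IsSpectrum muRB (range fun n : ℤ => pt n (β n)) := by
  have hinj : Function.Injective fun n : ℤ => pt n (β n) := fun m n h =>
    Int.cast_inj.mp (pt_inj.mp h).1
  refine orthonormal_and_dense_span_of_linearIsometry_eq_hilbertBasis
    (Lp.compMeasurePreservingₗᵢ ℂ circleToPlane measurePreserving_circleToPlane) fourierBasis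
    ((Equiv.ofInjective _ hinj).symm.trans (Equiv.neg ℤ)) _ ?_
  rintro ⟨_, n, rfl⟩
  refine (compMeasurePreserving_circleToPlane_expLp n (β n)).trans ?_
  simp [coe_fourierBasis]

theorem eq_of_range_pt_eq_range_pt {β β' : ℤ → ℝ}
    (h : (range fun n : ℤ => pt n (β n)) = range fun n : ℤ => pt n (β' n)) : β = β' := by
  funext n
  obtain ⟨m, hm⟩ : pt n (β n) ∈ range fun n : ℤ => pt n (β' n) := h ▸ mem_range_self n
  obtain ⟨hmn, hβ⟩ := pt_inj.mp hm
  rw [Int.cast_inj.mp hmn] at hβ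
  exact hβ.symm

theorem encard_range_pt_inter_ball_le (β : ℤ → ℝ) (x : Plane) (h : ℝ) :
    ((range fun n : ℤ => pt n (β n)) ∩ ball x h).encard ≤ {n : ℤ | |β n - x 1| < h}.encard := by
  refine (encard_mono ?_).trans (encard_image_le (fun n : ℤ => pt n (β n)) _)
  rintro _ ⟨⟨n, rfl⟩, hn⟩
  refine ⟨n, lt_of_le_of_lt ?_ (mem_ball.mp hn), rfl⟩
  exact (Real.dist_eq _ _).symm.trans_le (PiLp.dist_apply_le (pt n (β n)) x 1)

theorem encard_setOf_abs_pow_sub_lt_le {a : ℝ} (ha : 1 < a) (c h : ℝ) :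
    {k : ℕ | |a ^ k - c| < h}.encard ≤ ⌊Real.logb a (1 + 2 * h)⌋₊ + 1 := by
  set S := {k : ℕ | |a ^ k - c| < h}
  rcases S.eq_empty_or_nonempty with hS | hS
  · simp [hS]
  set k₀ := sInf S
  have hk₀ : |a ^ k₀ - c| < h := Nat.sInf_mem hS
  have hgap : ∀ l ∈ S, l - k₀ ≤ ⌊Real.logb a (1 + 2 * h)⌋₊ := by
    intro l hl
    have hkl : k₀ ≤ l := Nat.sInf_le hl
    have hdiff : a ^ k₀ * (a ^ (l - k₀) - 1) < 2 * h := by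
      rw [mul_sub, mul_one, ← pow_add, Nat.add_sub_cancel' hkl]
      linarith [(abs_lt.mp (show |a ^ l - c| < h from hl)).2, (abs_lt.mp hk₀).1]
    have hpow : a ^ (l - k₀) ≤ 1 + 2 * h := by
      nlinarith [one_le_pow₀ (n := k₀) ha.le, one_le_pow₀ (n := l - k₀) ha.le]
    apply Nat.le_floor
    calc ((l - k₀ : ℕ) : ℝ) = Real.logb a (a ^ (l - k₀)) := by
          rw [Real.logb_pow, Real.logb_self_eq_one ha, mul_one]
      _ ≤ Real.logb a (1 + 2 * h) := Real.logb_le_logb_of_le ha (by positivity) hpow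
  calc S.encard ≤ (Icc k₀ (k₀ + ⌊Real.logb a (1 + 2 * h)⌋₊)).encard :=
        encard_mono fun l hl => ⟨Nat.sInf_le hl, by have := hgap l hl; omega⟩
    _ = ⌊Real.logb a (1 + 2 * h)⌋₊ + 1 := by
        rw [← Finset.coe_Icc, encard_coe_eq_coe_finsetCard, Nat.card_Icc,
          add_assoc, Nat.add_sub_cancel_left, Nat.cast_succ]

def signedPow (a : ℝ) (n : ℤ) : ℝ := isgn n * a ^ n.natAbs

theorem signedPow_one (a : ℝ) : signedPow a 1 = a := by
  simp [signedPow, isgn]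

theorem signedPow_neg (a : ℝ) (n : ℤ) : signedPow a (-n) = -signedPow a n := by
  simp [signedPow, isgn]

theorem signedPow_natCast (a : ℝ) {k : ℕ} (hk : k ≠ 0) : signedPow a k = a ^ k := by
  simp [signedPow, isgn, Int.sign_natCast_of_ne_zero hk]

theorem encard_setOf_abs_signedPow_sub_lt_le {a : ℝ} (ha : 1 < a) (c h : ℝ) :
    {n : ℤ | |signedPow a n - c| < h}.encard ≤ 2 * ⌊Real.logb a (1 + 2 * h)⌋₊ + 3 := by
  set P : ℝ → Set ℕ := fun c => {k : ℕ | |a ^ k - c| < h}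
  have hsub : {n : ℤ | |signedPow a n - c| < h} ⊆
      insert 0 (((↑) '' P c) ∪ ((fun k : ℕ => -(k : ℤ)) '' P (-c))) := by
    intro n hn
    obtain ⟨k, rfl | rfl⟩ := Int.eq_nat_or_neg n <;> rcases eq_or_ne k 0 with rfl | hk
    all_goals simp_all [P, signedPow_neg, signedPow_natCast]
    rwa [← abs_neg, neg_add']
  calc _ ≤ (insert 0 (((↑) '' P c) ∪ ((fun k : ℕ => -(k : ℤ)) '' P (-c)))).encard :=
        encard_mono hsub
    _ ≤ (P c).encard + (P (-c)).encard + 1 := by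
        refine (encard_insert_le _ _).trans ?_
        gcongr
        exact (encard_union_le _ _).trans (add_le_add (encard_image_le _ _) (encard_image_le _ _))
    _ ≤ (⌊Real.logb a (1 + 2 * h)⌋₊ + 1) + (⌊Real.logb a (1 + 2 * h)⌋₊ + 1) + 1 := by
        gcongr <;> exact encard_setOf_abs_pow_sub_lt_le ha _ _
    _ = _ := by ring

theorem beurlingDim_eq_zero_of_encard_inter_ball_le {Λ : Set Plane} {N : ℝ → ℝ}
    (hN : ∀ r : ℝ, 0 < r → N =o[atTop] fun h => h ^ r)
    (hΛ : ∀ᶠ h in atTop, ∀ x, ((Λ ∩ ball x h).encard : ℝ≥0∞) ≤ ENNReal.ofReal (N h)) :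
    beurlingDim Λ = 0 := by
  suffices hempty : {r : ℝ | 0 < r ∧ beurlingDensity r Λ = ⊤} = ∅ by
    rw [beurlingDim, hempty, Real.sSup_empty]
  refine eq_empty_iff_forall_notMem.2 fun r ⟨hr, htop⟩ => ?_
  have hle : beurlingDensity r Λ ≤ 1 := by
    refine limsup_le_of_le (by isBoundedDefault) ?_
    filter_upwards [(hN r hr).bound one_pos, eventually_ge_atTop 0, hΛ] with h hNh h0 hcount
    refine iSup_le fun x => ENNReal.div_le_of_le_mul ?_
    rw [one_mul, Real.norm_of_nonneg (Real.rpow_nonneg h0 r)] at hNh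
    rw [one_mul]
    exact (hcount x).trans (ENNReal.ofReal_le_ofReal ((le_abs_self _).trans hNh))
  simp [htop] at hle

theorem isLittleO_log_one_add_two_mul_rpow {r : ℝ} (hr : 0 < r) :
    (fun h => Real.log (1 + 2 * h)) =o[atTop] fun h => h ^ r := by
  refine IsBigO.trans_isLittleO ?_ (isLittleO_log_rpow_atTop hr)
  refine IsBigO.of_bound 2 ?_
  filter_upwards [eventually_ge_atTop 3] with h h3
  rw [Real.norm_of_nonneg (Real.log_nonneg (by linarith)),
    Real.norm_of_nonneg (Real.log_nonneg (by linarith))]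
  calc Real.log (1 + 2 * h) ≤ Real.log (h ^ 2) := Real.log_le_log (by linarith) (by nlinarith)
    _ = 2 * Real.log h := by rw [Real.log_pow]; norm_num

theorem beurlingDim_range_pt_signedPow {a : ℝ} (ha : 1 < a) :
    beurlingDim (range fun n : ℤ => pt n (signedPow a n)) = 0 := by
  refine beurlingDim_eq_zero_of_encard_inter_ball_le
    (N := fun h => 2 / Real.log a * Real.log (1 + 2 * h) + 3) (fun r hr => ?_) ?_
  · exact ((isLittleO_log_one_add_two_mul_rpow hr).const_mul_left _).add
      (isLittleO_const_left.2 (Or.inr (tendsto_norm_atTop_atTop.comp (tendsto_rpow_atTop hr))))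
  filter_upwards [eventually_ge_atTop 0] with h h0 x
  calc _ ≤ ({n : ℤ | |signedPow a n - x 1| < h}.encard : ℝ≥0∞) := by
        exact_mod_cast encard_range_pt_inter_ball_le _ x h
    _ ≤ ((2 * ⌊Real.logb a (1 + 2 * h)⌋₊ + 3 : ℕ) : ℝ≥0∞) := by
        exact_mod_cast encard_setOf_abs_signedPow_sub_lt_le ha (x 1) h
    _ ≤ _ := by
        rw [← ENNReal.ofReal_natCast]
        refine ENNReal.ofReal_le_ofReal ?_
        have hfloor := Nat.floor_le (Real.logb_nonneg ha (show 1 ≤ 1 + 2 * h by linarith))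
        have hlogb : 2 / Real.log a * Real.log (1 + 2 * h) = 2 * Real.logb a (1 + 2 * h) := by
          rw [Real.logb]; ring
        push_cast
        linarith

/-- For every `a > 1`, with `β_a(n) = sgn(n)·a^{|n|}`, the set
`Λ_{β_a}` is a spectrum of `μ_{R,B}` with Beurling dimension `0`, and the sets
`Λ_{β_a}` for distinct `a > 1` are pairwise distinct. -/
theorem isSpectrum_muRB_exp_family :
    (∀ a : ℝ, 1 < a →
      IsSpectrum muRB (Set.range fun n : ℤ => pt (n : ℝ) (isgn n * a ^ n.natAbs)) ∧
        beurlingDim (Set.range fun n : ℤ => pt (n : ℝ) (isgn n * a ^ n.natAbs)) = 0) ∧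
    ∀ a a' : ℝ, 1 < a → 1 < a' →
      (Set.range fun n : ℤ => pt (n : ℝ) (isgn n * a ^ n.natAbs)) =
        (Set.range fun n : ℤ => pt (n : ℝ) (isgn n * a' ^ n.natAbs)) → a = a' := by
  refine ⟨fun a ha => ⟨isSpectrum_muRB_range_pt _, beurlingDim_range_pt_signedPow ha⟩,
    fun a a' _ _ h => ?_⟩
  have hβ : signedPow a = signedPow a' := eq_of_range_pt_eq_range_pt h
  rw [← signedPow_one a, hβ, signedPow_one]
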